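/- Fix an index k ∈ {1, …, m}, thresholds ε_j ∈ ℝ for j ≠ k, and a real number s > 0. If x* ∈ E maximizes the augmented objective f_k(x) + s · Σ_{j ≠ k} f_j(x) over E, then for every x ∈ E that weakly dominates x*, one has F(x) = F(x*), i.e., f_i(x) = f_i(x*) for all i ∈ {1, …, m}. -/
import Mathlib


open Finset

/-- If `x* ∈ E` maximizes the augmented objective
`f k x + s · Σ_{j ≠ k} f j x` over `E = {x : ∀ j ≠ k, f j x ≥ ε j}` with `s > 0`,
then every `x ∈ E` that weakly dominates `x*` satisfies `F(x) = F(x*)`,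
i.e. `f i x = f i x*` for all `i`. -/
theorem augmentedEpsilonConstraint_weaklyDominating_eq
    {X : Type*} [Nonempty X] {m : ℕ} (f : Fin m → X → ℝ) (k : Fin m)
    (ε : Fin m → ℝ) (s : ℝ) (hs : 0 < s) (xstar : X)
    (hfeas : ∀ j : Fin m, j ≠ k → ε j ≤ f j xstar)
    (hopt : ∀ x : X, (∀ j : Fin m, j ≠ k → ε j ≤ f j x) →
      f k x + s * ∑ j ∈ Finset.univ.erase k, f j x ≤
        f k xstar + s * ∑ j ∈ Finset.univ.erase k, f j xstar) :
    ∀ x : X, (∀ j : Fin m, j ≠ k → ε j ≤ f j x) →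
      (∀ i : Fin m, f i xstar ≤ f i x) → ∀ i : Fin m, f i x = f i xstar := by
  intro x hx hdom i
  have hsum : ∑ j ∈ Finset.univ.erase k, f j xstar ≤ ∑ j ∈ Finset.univ.erase k, f j x :=
    Finset.sum_le_sum fun j _ => hdom j
  have hk : f k xstar ≤ f k x := hdom k
  have hopt' := hopt x hx
  have hkeq : f k x = f k xstar := by nlinarith
  have hseq : ∑ j ∈ Finset.univ.erase k, f j x = ∑ j ∈ Finset.univ.erase k, f j xstar := by
    nlinarith
  by_cases hik : i = k
  · rw [hik]; exact hkeq
  · have := (Finset.sum_eq_sum_iff_of_le (fun j _ => hdom j)).1 hseq.symm i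
      (Finset.mem_erase.2 ⟨hik, Finset.mem_univ i⟩)
    exact this.symm
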